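/- arXiv:1209.6044 — 2 statements merged into one kernel-verified Lean document; each statement's English description precedes it below -/
import Mathlib

section
/- Let E(z) = P(z)·e^{Q(z)} with P of degree p ≥ 0 and Q of degree q ≥ 1. The set of critical points c of E with E(c) = 0 has cardinality (with multiplicity as roots of P' + P·Q') at most p - 1; equivalently, at least q critical points (counted with multiplicity) are not mapped to 0. -/
open Polynomial Classical

/-!
A root `c` of `P` of multiplicity `m` is a root of `P' + P * Q'` of multiplicity at most `m - 1`,
so the roots being counted form a submultiset of `P.roots - P.roots.dedup`, which has at most
`p - 1` elements.
-/

namespace Multiset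

variable {α : Type*} [DecidableEq α]

theorem count_sub_dedup (s : Multiset α) (a : α) : count a (s - s.dedup) = count a s - 1 := by
  rw [count_sub, count_dedup]
  split_ifs with ha
  · rfl
  · rw [count_eq_zero.mpr ha]

theorem card_sub_dedup_le (s : Multiset α) : card (s - s.dedup) ≤ card s - 1 := by
  rw [card_sub (dedup_le s)]
  rcases eq_or_ne s 0 with rfl | hs
  · simp
  · exact Nat.sub_le_sub_left (card_pos.mpr (dedup_eq_zero.not.mpr hs)) _

end Multiset

namespace Polynomial

variable {R : Type*} [CommRing R] [IsDomain R] [CharZero R]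

theorem derivative_ne_zero_of_isRoot {P : R[X]} {c : R} (hP : P ≠ 0) (h : P.IsRoot c) :
    derivative P ≠ 0 := by
  rw [Ne, derivative_eq_zero]
  intro h0
  rw [eq_C_of_natDegree_eq_zero h0, IsRoot, eval_C] at h
  exact hP (by rw [eq_C_of_natDegree_eq_zero h0, h, C_0])

/-- At a root of `P`, the term `P * Q'` vanishes to order at least `m = rootMultiplicity c P`,
while `P'` vanishes to order exactly `m - 1`. -/
theorem rootMultiplicity_derivative_add_mul_le {P : R[X]} {c : R} (Q : R[X]) (h : P.IsRoot c) :
    rootMultiplicity c (derivative P + P * derivative Q) ≤ rootMultiplicity c P - 1 := by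
  rcases eq_or_ne P 0 with rfl | hP
  · simp
  set m := rootMultiplicity c P
  have hm : 0 < m := (rootMultiplicity_pos hP).mpr h
  by_contra! hlt
  have hdvd : (X - C c) ^ m ∣ derivative P := by
    have hR : (X - C c) ^ m ∣ derivative P + P * derivative Q :=
      (pow_dvd_pow _ (by omega)).trans (pow_rootMultiplicity_dvd _ c)
    simpa using hR.sub ((pow_rootMultiplicity_dvd P c).mul_right (derivative Q))
  have := (le_rootMultiplicity_iff (derivative_ne_zero_of_isRoot hP h)).mpr hdvd
  rw [derivative_rootMultiplicity_of_root h] at this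
  omega

theorem roots_derivative_add_mul_filter_isRoot_le (P Q : R[X]) :
    (derivative P + P * derivative Q).roots.filter (fun c => P.eval c = 0) ≤
      P.roots - P.roots.dedup := by
  rw [Multiset.le_iff_count]
  intro c
  rw [Multiset.count_sub_dedup, count_roots]
  by_cases h : P.eval c = 0
  · rw [Multiset.count_filter_of_pos (p := fun c => P.eval c = 0) h, count_roots]
    exact rootMultiplicity_derivative_add_mul_le Q h
  · rw [Multiset.count_filter_of_neg (p := fun c => P.eval c = 0) h]
    exact Nat.zero_le _

end Polynomial

theorem stmt3_general (P Q : Polynomial ℂ) (p : ℕ)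
    (hp : P.natDegree = p) :
    (((Polynomial.derivative P + P * Polynomial.derivative Q).roots).filter
        (fun c => P.eval c = 0)).card ≤ p - 1 :=
  calc _ ≤ Multiset.card (P.roots - P.roots.dedup) :=
        Multiset.card_le_card (roots_derivative_add_mul_filter_isRoot_le P Q)
    _ ≤ Multiset.card P.roots - 1 := Multiset.card_sub_dedup_le _
    _ ≤ p - 1 := Nat.sub_le_sub_right (hp ▸ card_roots' P) 1

/-- The critical points of `E = P·e^Q` are the roots of `R = P' + P·Q'`.
Those critical points that are mapped to `0` by `E` (equivalently, roots of `R`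
that are also roots of `P`) number at most `p - 1` counted with multiplicity in `R`;
equivalently, at least `q` critical points are not mapped to `0`. -/
theorem stmt3 (P Q : Polynomial ℂ) (p q : ℕ)
    (hp : P.natDegree = p) (hq : Q.natDegree = q) (hq1 : 1 ≤ q)
    (hP : P ≠ 0) (hQ : Q ≠ 0) :
    (((Polynomial.derivative P + P * Polynomial.derivative Q).roots).filter
        (fun c => P.eval c = 0)).card ≤ p - 1 :=
  stmt3_general P Q p hp
end

section
/- An entire function f : ℂ → ℂ whose zero set is finite with total multiplicity p, and whose derivative has finitely many zeros with total multiplicity p + q - 1 (and f is of finite order), can be written as f(z) = P(z)·e^{Q(z)} for polynomials P of degree p and Q of degree q. More precisely: if f = P·e^g with P a polynomial of degree p and g entire, and f' has exactly p + q - 1 zeros counted with multiplicity (so that P·g' + P' is a polynomial of degree p+q-1), then g' is a polynomial of degree q - 1. -/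
open Polynomial Complex

/-
`P g' = R - P'` with `g'` continuous, so each root of `P` is a root of `R - P'` of at least the
same multiplicity: peeling off the linear factors of `P` one at a time gives `R - P' = P S`, and
`g' = S` off the finitely many roots of `P`, hence everywhere. The degree count then follows from
`deg P' < deg P`.
-/

namespace Polynomial

variable {𝕜 : Type*} [NontriviallyNormedField 𝕜]

theorem eq_of_forall_eval_mul_eq {P : 𝕜[X]} (hP : P ≠ 0) {u v : 𝕜 → 𝕜}
    (hu : Continuous u) (hv : Continuous v) (h : ∀ z, P.eval z * u z = P.eval z * v z) :
    u = v := by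
  have hdense : Dense {z | ¬P.IsRoot z} := by
    simpa only [← Set.compl_eq_univ_sdiff, Set.compl_ofPred] using
      dense_univ.sdiff_finite (finite_setOfPred_isRoot hP)
  exact hu.ext_on hdense hv fun z hz => mul_left_cancel₀ hz (h z)

theorem exists_eq_X_sub_C_mul_of_forall_eval_mul_eq {P Q : 𝕜[X]} {a : 𝕜} {h : 𝕜 → 𝕜}
    (hh : Continuous h) (hPQ : ∀ z, ((X - C a) * P).eval z * h z = Q.eval z) :
    ∃ Q₁, Q = (X - C a) * Q₁ ∧ ∀ z, P.eval z * h z = Q₁.eval z := by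
  have hQa : Q.IsRoot a := by simpa using (hPQ a).symm
  obtain ⟨Q₁, rfl⟩ := dvd_iff_isRoot.mpr hQa
  refine ⟨Q₁, rfl, congrFun (eq_of_forall_eval_mul_eq (X_sub_C_ne_zero a)
    (by fun_prop) Q₁.continuous fun z => ?_)⟩
  simpa [mul_assoc] using hPQ z

theorem dvd_of_forall_eval_mul_eq [IsAlgClosed 𝕜] {P Q : 𝕜[X]} (hP : P ≠ 0) {h : 𝕜 → 𝕜}
    (hh : Continuous h) (hPQ : ∀ z, P.eval z * h z = Q.eval z) : P ∣ Q := by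
  induction hn : P.natDegree generalizing P Q with
  | zero =>
    rw [eq_C_of_natDegree_eq_zero hn] at hP ⊢
    exact (isUnit_C.mpr (Ne.isUnit fun h0 => hP (by rw [h0, C_0]))).dvd
  | succ n ih =>
    obtain ⟨a, ha⟩ := IsAlgClosed.exists_root P (by rw [degree_eq_natDegree hP, hn]; norm_cast)
    obtain ⟨P₁, rfl⟩ := dvd_iff_isRoot.mpr ha
    obtain ⟨Q₁, rfl, hP₁Q₁⟩ := exists_eq_X_sub_C_mul_of_forall_eval_mul_eq hh hPQ
    have hP₁ : P₁ ≠ 0 := right_ne_zero_of_mul hP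
    rw [natDegree_mul (X_sub_C_ne_zero a) hP₁, natDegree_X_sub_C] at hn
    exact mul_dvd_mul_left _ (ih hP₁ hP₁Q₁ (by omega))

theorem natDegree_mul_add_derivative {A : Type*} [CommRing A] [IsDomain A]
    {P S : A[X]} (hP : P ≠ 0) (hS : S ≠ 0) :
    (P * S + derivative P).natDegree = P.natDegree + S.natDegree := by
  rw [← natDegree_mul hP hS]
  refine natDegree_eq_of_degree_eq (degree_add_eq_left_of_degree_lt ?_)
  calc (derivative P).degree < P.degree := degree_derivative_lt hP
    _ ≤ (P * S).degree := degree_le_mul_left P hS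

end Polynomial

theorem stmt4_general (g : ℂ → ℂ) (P R : Polynomial ℂ) (p q : ℕ)
    (hg : Differentiable ℂ g)
    (hP : P ≠ 0) (hpdeg : P.natDegree = p)
    (hq : 1 ≤ q) (hRdeg : R.natDegree = p + q - 1)
    (hR : ∀ z, P.eval z * deriv g z + (Polynomial.derivative P).eval z = R.eval z) :
    ∃ S : Polynomial ℂ, S.natDegree = q - 1 ∧ ∀ z, deriv g z = S.eval z := by
  have hcont : Continuous (deriv g) := (hg.contDiff (n := 1)).continuous_deriv le_rfl
  have hQ : ∀ z, P.eval z * deriv g z = (R - derivative P).eval z := fun z => by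
    rw [eval_sub, ← hR z, add_sub_cancel_right]
  obtain ⟨S, hS⟩ := dvd_of_forall_eval_mul_eq hP hcont hQ
  have hgS : deriv g = fun z => S.eval z :=
    eq_of_forall_eval_mul_eq hP hcont S.continuous fun z => by rw [hQ, hS, eval_mul]
  have hRPS : R = P * S + derivative P := by rw [← hS, sub_add_cancel]
  refine ⟨S, ?_, congrFun hgS⟩
  by_cases hS0 : S = 0
  · have := natDegree_derivative_le P
    rw [hRPS, hS0, mul_zero, zero_add] at hRdeg
    rw [hS0, natDegree_zero]
    omega
  · rw [hRPS, natDegree_mul_add_derivative hP hS0] at hRdeg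
    omega

/-- If an entire function has the form `f = P·e^g` with `P` a polynomial of degree `p`
and `g` entire, and `P·g' + P'` agrees with a polynomial `R` of degree `p + q - 1`
(`q ≥ 1`), then `g'` is a polynomial function of degree `q - 1`. -/
theorem stmt4 (f g : ℂ → ℂ) (P R : Polynomial ℂ) (p q : ℕ)
    (hf : Differentiable ℂ f) (hg : Differentiable ℂ g)
    (hP : P ≠ 0) (hpdeg : P.natDegree = p)
    (hfPg : ∀ z, f z = P.eval z * Complex.exp (g z))
    (hq : 1 ≤ q) (hRdeg : R.natDegree = p + q - 1)
    (hR : ∀ z, P.eval z * deriv g z + (Polynomial.derivative P).eval z = R.eval z) :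
    ∃ S : Polynomial ℂ, S.natDegree = q - 1 ∧ ∀ z, deriv g z = S.eval z :=
  stmt4_general g P R p q hg hP hpdeg hq hRdeg hR
end
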